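/- arXiv:1309.4242 — 9 statements merged into one kernel-verified Lean document; each statement's English description precedes it below -/
import Mathlib

section
/- Let ⊕ be an A-operation on ℝ⁺. Then ⊕ is strict (u < v implies u ⊕ w < v ⊕ w for all w ∈ ℝ⁺) if and only if w ⊖̄ v = w ⊖̲ v for all pairs (w,v) in the domain of the upper subtraction ⊖̄. -/
/-!
Everything happens in one variable: write `f = (· ⊕ w)`. If `f` is strictly increasing and
continuous, the intermediate value theorem puts a solution of `f u = w` between the maximum of
`{f ≤ w}` and the minimum of `{w ≤ f}`, so the two coincide. Conversely, if `f u = f v` with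
`u < v`, then for the level `f u` the maximum of `{f ≤ f u}` is at least `v` while the minimum of
`{f u ≤ f}` is at most `u`; both extrema exist because these sets are closed, nonempty, and
bounded (above by unboundedness of `f`, below by `0`).
-/

open Filter Set

theorem Filter.Tendsto.bddAbove_setOf_le {α β : Type*} [LinearOrder α] [Nonempty α]
    [Preorder β] [NoMaxOrder β] {f : α → β} (hf : Tendsto f atTop atTop) (w : β) :
    BddAbove {u | f u ≤ w} := by
  obtain ⟨N, hN⟩ := eventually_atTop.1 (hf.eventually_gt_atTop w)
  exact ⟨N, fun u hu => not_lt.1 fun hNu => (hN u hNu.le).not_ge hu⟩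

section

variable {α β : Type*} [TopologicalSpace α] [LinearOrder β] [TopologicalSpace β]
  [OrderClosedTopology β] {f : α → β}

theorem StrictMono.isGreatest_eq_isLeast [ConditionallyCompleteLinearOrder α] [OrderTopology α]
    [DenselyOrdered α] (hf : StrictMono f) (hc : Continuous f) {w : β} {ub lb : α}
    (hub : IsGreatest {u | f u ≤ w} ub) (hlb : IsLeast {u | w ≤ f u} lb) : ub = lb := by
  have hle : ub ≤ lb := not_lt.1 fun hlt => (hlb.1.trans_lt (hf hlt)).not_ge hub.1
  obtain ⟨u, -, hu⟩ := intermediate_value_Icc hle hc.continuousOn ⟨hub.1, hlb.1⟩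
  exact hle.antisymm ((hlb.2 hu.ge).trans (hub.2 hu.le))

theorem strictMono_of_isGreatest_eq_isLeast [ConditionallyCompleteLinearOrderBot α]
    [OrderTopology α] [NoMaxOrder β] (hc : Continuous f) (hf : Tendsto f atTop atTop)
    (h : ∀ w ub lb, IsGreatest {u | f u ≤ w} ub → IsLeast {u | w ≤ f u} lb → ub = lb) :
    StrictMono f := by
  intro u v huv
  by_contra! hvu
  have hgreatest : IsGreatest {x | f x ≤ f u} (sSup {x | f x ≤ f u}) :=
    (isClosed_le hc continuous_const).isGreatest_csSup ⟨u, le_rfl⟩ (hf.bddAbove_setOf_le _)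
  have hleast : IsLeast {x | f u ≤ f x} (sInf {x | f u ≤ f x}) :=
    (isClosed_le continuous_const hc).isLeast_csInf ⟨u, le_rfl⟩ (OrderBot.bddBelow _)
  have hv : v ≤ sSup {x | f x ≤ f u} := hgreatest.2 hvu
  have hu : sInf {x | f u ≤ f x} ≤ u := hleast.2 le_rfl
  exact huv.not_ge (hv.trans ((h _ _ _ hgreatest hleast).trans_le hu))

end

theorem stmt_5_general
    (op : NNReal → NNReal → NNReal)
    (hcont : Continuous fun p : NNReal × NNReal => op p.1 p.2)
    (hunb : ∀ v : NNReal, Tendsto (fun u => op u v) atTop atTop) :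
    (∀ u v w : NNReal, u < v → op u w < op v w) ↔
      (∀ w v ub lb : NNReal, IsGreatest {u : NNReal | op u v ≤ w} ub →
        IsLeast {u : NNReal | w ≤ op u v} lb → ub = lb) := by
  have hcontv (v : NNReal) : Continuous fun u => op u v := by fun_prop
  refine ⟨fun hstrict w v _ _ => ?_, fun hlevel u v w huv => ?_⟩
  · exact StrictMono.isGreatest_eq_isLeast (fun u u' => hstrict u u' v) (hcontv v)
  · exact strictMono_of_isGreatest_eq_isLeast (hcontv w) (hunb w) (hlevel · w) huv

theorem stmt_5
    (op : NNReal → NNReal → NNReal)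
    (hcont : Continuous fun p : NNReal × NNReal => op p.1 p.2)
    (hassoc : ∀ u v w, op u (op v w) = op (op u v) w)
    (hcomm : ∀ u v, op u v = op v u)
    (hmono : ∀ u v w : NNReal, u ≤ v → op u w ≤ op v w)
    (hunb : ∀ v : NNReal, Tendsto (fun u => op u v) atTop atTop) :
    (∀ u v w : NNReal, u < v → op u w < op v w) ↔
      (∀ w v ub lb : NNReal, IsGreatest {u : NNReal | op u v ≤ w} ub →
        IsLeast {u : NNReal | w ≤ op u v} lb → ub = lb) :=
  stmt_5_general op hcont hunb
end

section
/- Let ⊕ be an A-operation on ℝ⁺ and u, v, w ∈ ℝ⁺. If (v,u) is in the domain of ⊖̄ and (w, v ⊖̄ u) is in the domain of ⊖̄, then (w ⊕ u, v) is in the domain of ⊖̄ and (w ⊕ u) ⊖̲ v ≤ w ⊖̄ (v ⊖̄ u) ≤ (w ⊕ u) ⊖̄ v. -/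
/-! Upper subtraction is an exact inverse: by continuity and unboundedness of `t ↦ t ⊕ u`, the
intermediate value theorem forces the greatest `d` with `d ⊕ u ≤ v` to satisfy `d ⊕ u = v`.
Hence `v = (v ⊖̄ u) ⊕ u` and `w = (w ⊖̄ (v ⊖̄ u)) ⊕ (v ⊖̄ u)`, and associativity gives
`(w ⊖̄ (v ⊖̄ u)) ⊕ v = w ⊕ u`, so `w ⊖̄ (v ⊖̄ u)` lies in both sets defining `(w ⊕ u) ⊖̲ v`
and `(w ⊕ u) ⊖̄ v`. -/

open Filter

theorem IsGreatest.apply_eq_of_tendsto_atTop {α β : Type*} [ConditionallyCompleteLinearOrder α]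
    [TopologicalSpace α] [OrderTopology α] [DenselyOrdered α] [LinearOrder β]
    [TopologicalSpace β] [OrderClosedTopology β] {f : α → β} (hf : Continuous f)
    (htop : Tendsto f atTop atTop) {v : β} {d : α} (hd : IsGreatest {t | f t ≤ v} d) :
    f d = v := by
  have : Nonempty α := ⟨d⟩
  obtain ⟨T, hvT, hdT⟩ :=
    ((htop.eventually (eventually_ge_atTop v)).and (eventually_ge_atTop d)).exists
  obtain ⟨c, ⟨hdc, -⟩, hcv⟩ := intermediate_value_Icc hdT hf.continuousOn ⟨hd.1, hvT⟩
  rwa [le_antisymm (hd.2 hcv.le) hdc] at hcv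

theorem stmt_9_general
    (op : NNReal → NNReal → NNReal)
    (hcont : Continuous fun p : NNReal × NNReal => op p.1 p.2)
    (hassoc : ∀ u v w, op u (op v w) = op (op u v) w)
    (hunb : ∀ v : NNReal, Tendsto (fun u => op u v) atTop atTop)
    (u v w d k : NNReal)
    (hd : IsGreatest {t : NNReal | op t u ≤ v} d)
    (hk : IsGreatest {t : NNReal | op t d ≤ w} k) :
    (∃ u₀, op u₀ v ≤ op w u) ∧
    (∀ lb, IsLeast {t : NNReal | op w u ≤ op t v} lb → lb ≤ k) ∧
    (∀ ub, IsGreatest {t : NNReal | op t v ≤ op w u} ub → k ≤ ub) := by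
  have hcont_left (x : NNReal) : Continuous fun t => op t x :=
    hcont.comp (continuous_id.prodMk continuous_const)
  have hdu : op d u = v := hd.apply_eq_of_tendsto_atTop (hcont_left u) (hunb u)
  have hkd : op k d = w := hk.apply_eq_of_tendsto_atTop (hcont_left d) (hunb d)
  have hkv : op k v = op w u := by rw [← hdu, ← hkd, hassoc]
  exact ⟨⟨k, hkv.le⟩, fun _ hlb => hlb.2 hkv.ge, fun _ hub => hub.2 hkv.le⟩

theorem stmt_9
    (op : NNReal → NNReal → NNReal)
    (hcont : Continuous fun p : NNReal × NNReal => op p.1 p.2)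
    (hassoc : ∀ u v w, op u (op v w) = op (op u v) w)
    (hcomm : ∀ u v, op u v = op v u)
    (hmono : ∀ u v w : NNReal, u ≤ v → op u w ≤ op v w)
    (hunb : ∀ v : NNReal, Tendsto (fun u => op u v) atTop atTop)
    (u v w d k : NNReal)
    (hd : IsGreatest {t : NNReal | op t u ≤ v} d)
    (hk : IsGreatest {t : NNReal | op t d ≤ w} k) :
    (∃ u₀, op u₀ v ≤ op w u) ∧
    (∀ lb, IsLeast {t : NNReal | op w u ≤ op t v} lb → lb ≤ k) ∧
    (∀ ub, IsGreatest {t : NNReal | op t v ≤ op w u} ub → k ≤ ub) :=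
  stmt_9_general op hcont hassoc hunb u v w d k hd hk
end

section
/- Let ⊕ be an A-operation on ℝ⁺. For all u, v, w ∈ ℝ⁺: (w ⊕ u) ⊖̲ [(v ⊖̲ u) ⊕ u] ≤ w ⊖̲ (v ⊖̲ u), where ⊖̲ denotes the lower subtraction. -/
open Filter

theorem stmt_10_general
    (op : NNReal → NNReal → NNReal)
    (hassoc : ∀ u v w, op u (op v w) = op (op u v) w)
    (hmono : ∀ u v w : NNReal, u ≤ v → op u w ≤ op v w)
    (u v w a b c : NNReal)
    (hb : IsLeast {t : NNReal | w ≤ op t a} b)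
    (hc : IsLeast {t : NNReal | op w u ≤ op t (op a u)} c) :
    c ≤ b :=
  hc.2 <| calc
    op w u ≤ op (op b a) u := hmono w (op b a) u hb.1
    _ = op b (op a u) := (hassoc b a u).symm

theorem stmt_10
    (op : NNReal → NNReal → NNReal)
    (hcont : Continuous fun p : NNReal × NNReal => op p.1 p.2)
    (hassoc : ∀ u v w, op u (op v w) = op (op u v) w)
    (hcomm : ∀ u v, op u v = op v u)
    (hmono : ∀ u v w : NNReal, u ≤ v → op u w ≤ op v w)
    (hunb : ∀ v : NNReal, Tendsto (fun u => op u v) atTop atTop)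
    (u v w a b c : NNReal)
    (ha : IsLeast {t : NNReal | v ≤ op t u} a)
    (hb : IsLeast {t : NNReal | w ≤ op t a} b)
    (hc : IsLeast {t : NNReal | op w u ≤ op t (op a u)} c) :
    c ≤ b :=
  stmt_10_general op hassoc hmono u v w a b c hb hc
end

section
/- Let ⊕ be an A-operation on ℝ⁺. If u ∈ ℝ⁺ and (w,v) is in the domain of the upper subtraction ⊖̄, then (u ⊕ w, u ⊕ v) is also in the domain of ⊖̄ and w ⊖̄ v ≤ (u ⊕ w) ⊖̄ (u ⊕ v). If moreover ⊕ is strict, then equality holds: (u ⊕ w) ⊖̄ (u ⊕ v) = w ⊖̄ v. -/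
/-! Since `t ⊕ (u ⊕ v) = u ⊕ (t ⊕ v)`, monotonicity of `u ⊕ ·` puts every `t` with `t ⊕ v ≤ w`
among those with `t ⊕ (u ⊕ v) ≤ u ⊕ w`; strictness makes `u ⊕ ·` order-reflecting, so the two
sets coincide and so do their greatest elements. -/

open Filter

section CommutativeOperation

variable {α : Type*} {op : α → α → α}

theorem op_left_comm_of_assoc_of_comm (hassoc : ∀ a b c, op a (op b c) = op (op a b) c)
    (hcomm : ∀ a b, op a b = op b a) (a b c : α) : op a (op b c) = op b (op a c) := by
  rw [hassoc, hassoc, hcomm a b]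

theorem op_le_op_left_of_le [Preorder α] (hcomm : ∀ a b, op a b = op b a)
    (hmono : ∀ a b c, a ≤ b → op a c ≤ op b c) {x y : α} (h : x ≤ y) (c : α) :
    op c x ≤ op c y := by
  rw [hcomm c x, hcomm c y]
  exact hmono x y c h

theorem le_of_op_le_op_left [LinearOrder α] (hcomm : ∀ a b, op a b = op b a)
    (hstrict : ∀ a b c, a < b → op a c < op b c) {x y c : α} (h : op c x ≤ op c y) : x ≤ y := by
  by_contra! hyx
  rw [hcomm c x, hcomm c y] at h
  exact (hstrict y x c hyx).not_ge h

theorem op_op_le_op_of_op_le [Preorder α] (hassoc : ∀ a b c, op a (op b c) = op (op a b) c)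
    (hcomm : ∀ a b, op a b = op b a) (hmono : ∀ a b c, a ≤ b → op a c ≤ op b c)
    {t v w : α} (h : op t v ≤ w) (u : α) : op t (op u v) ≤ op u w := by
  rw [op_left_comm_of_assoc_of_comm hassoc hcomm]
  exact op_le_op_left_of_le hcomm hmono h u

theorem setOf_op_op_le_op_eq [LinearOrder α] (hassoc : ∀ a b c, op a (op b c) = op (op a b) c)
    (hcomm : ∀ a b, op a b = op b a) (hmono : ∀ a b c, a ≤ b → op a c ≤ op b c)
    (hstrict : ∀ a b c, a < b → op a c < op b c) (u v w : α) :
    {t | op t (op u v) ≤ op u w} = {t | op t v ≤ w} := by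
  ext t
  refine ⟨fun h => ?_, fun h => op_op_le_op_of_op_le hassoc hcomm hmono h u⟩
  rw [Set.mem_ofPred_eq, op_left_comm_of_assoc_of_comm hassoc hcomm] at h
  exact le_of_op_le_op_left hcomm hstrict h

end CommutativeOperation

theorem stmt_11_general
    (op : NNReal → NNReal → NNReal)
    (hassoc : ∀ u v w, op u (op v w) = op (op u v) w)
    (hcomm : ∀ u v, op u v = op v u)
    (hmono : ∀ u v w : NNReal, u ≤ v → op u w ≤ op v w)
    (u v w d : NNReal)
    (hd : IsGreatest {t : NNReal | op t v ≤ w} d) :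
    (∃ u₀, op u₀ (op u v) ≤ op u w) ∧
    (∀ d', IsGreatest {t : NNReal | op t (op u v) ≤ op u w} d' → d ≤ d') ∧
    ((∀ a b c : NNReal, a < b → op a c < op b c) →
      ∀ d', IsGreatest {t : NNReal | op t (op u v) ≤ op u w} d' → d' = d) := by
  have hd_mem : op d (op u v) ≤ op u w := op_op_le_op_of_op_le hassoc hcomm hmono hd.1 u
  refine ⟨⟨d, hd_mem⟩, fun d' hd' => hd'.2 hd_mem, fun hstrict d' hd' => ?_⟩
  rw [setOf_op_op_le_op_eq hassoc hcomm hmono hstrict] at hd'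
  exact hd'.unique hd

theorem stmt_11
    (op : NNReal → NNReal → NNReal)
    (hcont : Continuous fun p : NNReal × NNReal => op p.1 p.2)
    (hassoc : ∀ u v w, op u (op v w) = op (op u v) w)
    (hcomm : ∀ u v, op u v = op v u)
    (hmono : ∀ u v w : NNReal, u ≤ v → op u w ≤ op v w)
    (hunb : ∀ v : NNReal, Tendsto (fun u => op u v) atTop atTop)
    (u v w d : NNReal)
    (hd : IsGreatest {t : NNReal | op t v ≤ w} d) :
    (∃ u₀, op u₀ (op u v) ≤ op u w) ∧
    (∀ d', IsGreatest {t : NNReal | op t (op u v) ≤ op u w} d' → d ≤ d') ∧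
    ((∀ a b c : NNReal, a < b → op a c < op b c) →
      ∀ d', IsGreatest {t : NNReal | op t (op u v) ≤ op u w} d' → d' = d) :=
  stmt_11_general op hassoc hcomm hmono u v w d hd
end

section
/- Let (X,𝒮) be an optimization space, ⊕ a strict A-operation on ℝ⁺, C a cost function, S* an optimal solution of minimizing f_C(S) = ⊕_{y∈S} C(y) over S ∈ 𝒮, and x ∈ S*. Then for every γ ∈ ℝ⁺ with γ ≤ C(x), the solution S* remains optimal for the perturbed problem with cost C_{x,γ}: f(C_{x,γ})(S*) ≤ f(C_{x,γ})(S) for all S ∈ 𝒮. -/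
/-!
Since `⊕` is strictly monotone, commutative and associative, it is cancellative, and for
`a, b ∈ ℝ⁺ ∪ {e}` (with `e` a formal unit) the comparison of `c ⊕ a` with `c ⊕ b` does not depend
on `c`. If `x ∉ S`, lowering the cost of `x` lowers `f(S*)` and leaves `f(S)` unchanged. If `x ∈ S`,
both `f(S*)` and `f(S)` have the form `C(x) ⊕ a` with `a` unaffected by the perturbation, so the
comparison survives replacing `C(x)` by `γ`.
-/

section Operation

variable {op : NNReal → NNReal → NNReal}
  (hcomm : ∀ u v, op u v = op v u)
  (hmono : ∀ u v w : NNReal, u ≤ v → op u w ≤ op v w)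

include hcomm hmono in
theorem op_le_op {a a' b b' : NNReal} (ha : a ≤ a') (hb : b ≤ b') : op a b ≤ op a' b' :=
  calc op a b ≤ op a' b := hmono _ _ _ ha
    _ = op b a' := hcomm _ _
    _ ≤ op b' a' := hmono _ _ _ hb
    _ = op a' b' := hcomm _ _

theorem le_of_op_le_op_right (hstrict : ∀ u v w : NNReal, u < v → op u w < op v w)
    {a b w : NNReal} (h : op a w ≤ op b w) : a ≤ b :=
  le_of_not_gt fun hba => (hstrict _ _ _ hba).not_ge h

include hcomm hmono in
/-- `r.elim c (op c)` is `c ⊕ r`, where `none` plays the role of an adjoined unit. -/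
theorem Option.elim_op_le_elim_op
    (hassoc : ∀ u v w, op u (op v w) = op (op u v) w)
    (hstrict : ∀ u v w : NNReal, u < v → op u w < op v w)
    {a b : Option NNReal} {c d : NNReal}
    (h : a.elim c (op c) ≤ b.elim c (op c)) : a.elim d (op d) ≤ b.elim d (op d) := by
  have cancel := @le_of_op_le_op_right _ hstrict
  have mono := @op_le_op _ hcomm hmono
  match a, b, h with
  | none, none, _ => exact le_rfl
  | none, some b, h =>
    exact cancel <| calc op d c ≤ op d (op c b) := mono le_rfl h
      _ = op (op d b) c := by rw [← hassoc, hcomm b c]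
  | some a, none, h =>
    exact cancel <| calc op (op d a) c = op d (op c a) := by rw [← hassoc, hcomm a c]
      _ ≤ op d c := mono le_rfl h
  | some a, some b, h =>
    exact mono le_rfl (cancel (w := c) (by rwa [hcomm a, hcomm b]))

end Operation

section Objective

variable {X : Type*} [DecidableEq X] {op : NNReal → NNReal → NNReal}
  {F : (X → NNReal) → Finset X → NNReal}
  (hFsingle : ∀ (D : X → NNReal) (x : X), F D {x} = D x)
  (hFins : ∀ (D : X → NNReal) (x : X) (S : Finset X), x ∉ S → S.Nonempty →
    F D (insert x S) = op (D x) (F D S))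

include hFsingle hFins

theorem objective_congr {D D' : X → NNReal} {T : Finset X} (hT : T.Nonempty)
    (h : ∀ y ∈ T, D y = D' y) : F D T = F D' T := by
  induction hT using Finset.Nonempty.cons_induction with
  | singleton a => rw [hFsingle, hFsingle, h a (Finset.mem_singleton_self a)]
  | cons a s ha hs ih =>
    rw [Finset.cons_eq_insert] at h ⊢
    rw [hFins D a s ha hs, hFins D' a s ha hs, h a (Finset.mem_insert_self a s),
      ih fun y hy => h y (Finset.mem_insert_of_mem hy)]

theorem objective_mono (hcomm : ∀ u v, op u v = op v u)
    (hmono : ∀ u v w : NNReal, u ≤ v → op u w ≤ op v w)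
    {D D' : X → NNReal} (hD : D ≤ D') {T : Finset X} (hT : T.Nonempty) : F D T ≤ F D' T := by
  induction hT using Finset.Nonempty.cons_induction with
  | singleton a => rw [hFsingle, hFsingle]; exact hD a
  | cons a s ha hs ih =>
    rw [Finset.cons_eq_insert, hFins D a s ha hs, hFins D' a s ha hs]
    exact op_le_op hcomm hmono (hD a) ih

theorem exists_objective_eq_elim_op (D : X → NNReal) {x : X} {T : Finset X} (hx : x ∈ T)
    (γ : NNReal) : ∃ r : Option NNReal, F D T = r.elim (D x) (op (D x)) ∧
      F (Function.update D x γ) T = r.elim γ (op γ) := by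
  by_cases hrest : (T.erase x).Nonempty
  · have hsplit : ∀ D' : X → NNReal, F D' T = op (D' x) (F D' (T.erase x)) := fun D' => by
      conv_lhs => rw [← Finset.insert_erase hx]
      exact hFins D' x _ (Finset.notMem_erase x T) hrest
    refine ⟨some (F D (T.erase x)), hsplit D, ?_⟩
    rw [hsplit, Function.update_self,
      objective_congr hFsingle hFins hrest fun y hy =>
        Function.update_of_ne (Finset.ne_of_mem_erase hy) γ D]
    rfl
  · have hT : T = {x} := by
      rw [Finset.not_nonempty_iff_eq_empty, Finset.erase_eq_empty_iff] at hrest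
      exact hrest.resolve_left (Finset.ne_empty_of_mem hx)
    exact ⟨none, by rw [hT, hFsingle]; rfl, by rw [hT, hFsingle, Function.update_self]; rfl⟩

end Objective

open Filter

theorem stmt_15_general {X : Type*} [DecidableEq X]
    (𝒮 : Finset (Finset X))
    (hne : ∀ S ∈ 𝒮, S.Nonempty)
    (op : NNReal → NNReal → NNReal)
    (hassoc : ∀ u v w, op u (op v w) = op (op u v) w)
    (hcomm : ∀ u v, op u v = op v u)
    (hmono : ∀ u v w : NNReal, u ≤ v → op u w ≤ op v w)
    (hstrict : ∀ u v w : NNReal, u < v → op u w < op v w)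
    (F : (X → NNReal) → Finset X → NNReal)
    (hFsingle : ∀ (D : X → NNReal) (x : X), F D {x} = D x)
    (hFins : ∀ (D : X → NNReal) (x : X) (S : Finset X), x ∉ S → S.Nonempty →
      F D (insert x S) = op (D x) (F D S))
    (C : X → NNReal)
    (Sstar : Finset X) (hSstar : Sstar ∈ 𝒮)
    (hopt : ∀ S ∈ 𝒮, F C Sstar ≤ F C S)
    (x : X) (hx : x ∈ Sstar)
    (γ : NNReal) (hγ : γ ≤ C x) :
    ∀ S ∈ 𝒮, F (Function.update C x γ) Sstar ≤ F (Function.update C x γ) S := by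
  intro S hS
  by_cases hxS : x ∈ S
  · obtain ⟨r, hr, hr'⟩ := exists_objective_eq_elim_op hFsingle hFins C hx γ
    obtain ⟨s, hs, hs'⟩ := exists_objective_eq_elim_op hFsingle hFins C hxS γ
    rw [hr', hs']
    exact Option.elim_op_le_elim_op hcomm hmono hassoc hstrict (hr ▸ hs ▸ hopt S hS)
  · have hlower : Function.update C x γ ≤ C := update_le_iff.2 ⟨hγ, fun _ _ => le_rfl⟩
    calc F (Function.update C x γ) Sstar ≤ F C Sstar :=
          objective_mono hFsingle hFins hcomm hmono hlower (hne Sstar hSstar)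
      _ ≤ F C S := hopt S hS
      _ = F (Function.update C x γ) S := objective_congr hFsingle hFins (hne S hS)
          fun y hy => (Function.update_of_ne (ne_of_mem_of_not_mem hy hxS) γ C).symm

theorem stmt_15 {X : Type*} [Fintype X] [DecidableEq X]
    (hX : 2 ≤ Fintype.card X)
    (𝒮 : Finset (Finset X))
    (hne : ∀ S ∈ 𝒮, S.Nonempty)
    (hcup : ∀ x : X, ∃ S ∈ 𝒮, x ∈ S)
    (hcap : ∀ x : X, ∃ S ∈ 𝒮, x ∉ S)
    (op : NNReal → NNReal → NNReal)
    (hcont : Continuous fun p : NNReal × NNReal => op p.1 p.2)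
    (hassoc : ∀ u v w, op u (op v w) = op (op u v) w)
    (hcomm : ∀ u v, op u v = op v u)
    (hmono : ∀ u v w : NNReal, u ≤ v → op u w ≤ op v w)
    (hunb : ∀ v : NNReal, Tendsto (fun u => op u v) atTop atTop)
    (hstrict : ∀ u v w : NNReal, u < v → op u w < op v w)
    (F : (X → NNReal) → Finset X → NNReal)
    (hFsingle : ∀ (D : X → NNReal) (x : X), F D {x} = D x)
    (hFins : ∀ (D : X → NNReal) (x : X) (S : Finset X), x ∉ S → S.Nonempty →
      F D (insert x S) = op (D x) (F D S))
    (C : X → NNReal)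
    (Sstar : Finset X) (hSstar : Sstar ∈ 𝒮)
    (hopt : ∀ S ∈ 𝒮, F C Sstar ≤ F C S)
    (x : X) (hx : x ∈ Sstar)
    (γ : NNReal) (hγ : γ ≤ C x) :
    ∀ S ∈ 𝒮, F (Function.update C x γ) Sstar ≤ F (Function.update C x γ) S :=
  stmt_15_general 𝒮 hne op hassoc hcomm hmono hstrict F hFsingle hFins C Sstar hSstar hopt x hx γ hγ
end

section
/- Let (X,𝒮) be an optimization space, ⊕ a strict A-operation with neutral element e, C a cost function, and let S* be optimal for minimizing f_C over 𝒮 with x ∈ S*. Define C⁺_{S*}(x) = f_C(𝒮*₋ₓ) ⊖̄ F_C(S* ∖ {x}), where f_C(𝒮*₋ₓ) = min{f_C(S) : S ∈ 𝒮, x ∉ S}. Then the upper tolerance u_{S*}(x) := C⁺_{S*}(x) ⊖̄ C(x) satisfies u_{S*}(x) = f_C(𝒮*₋ₓ) ⊖̄ f_C(𝒮*) ≥ e, where f_C(𝒮*) = min_{S∈𝒮} f_C(S); moreover u_{S*}(x) = e iff f_C(𝒮*₋ₓ) = f_C(𝒮*). -/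
/-!
Since `F C S* = C x ⊕ F C (S* ∖ {x})` and `⊕` is associative and monotone, the two nested upper
subtractions collapse into one: `u ⊕ C x ≤ C⁺` iff `u ⊕ F C S* ≤ f_C(𝒮*₋ₓ)`. Optimality of `S*`
gives `F C S* ≤ f_C(𝒮*₋ₓ)`, so `e` belongs to that set. If the inequality is strict, continuity
lets some `u > e` in as well; if it is an equality, strict monotonicity keeps every `u > e` out.
-/

open Filter Topology

section Residual

variable {op : NNReal → NNReal → NNReal} {a b c e m s t : NNReal}

theorem le_iff_le_of_isGreatest_residual (hmono : Monotone fun v => op v b)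
    (hc : IsGreatest {v | op v b ≤ m} c) {v : NNReal} : op v b ≤ m ↔ v ≤ c :=
  ⟨fun h => hc.2 h, fun h => (hmono h).trans hc.1⟩

theorem isGreatest_residual_op (hassoc : ∀ u v w, op u (op v w) = op (op u v) w)
    (hmono : Monotone fun v => op v b) (hc : IsGreatest {v | op v b ≤ m} c)
    (ht : IsGreatest {u | op u a ≤ c} t) : IsGreatest {u | op u (op a b) ≤ m} t := by
  have hsets : {u | op u (op a b) ≤ m} = {u | op u a ≤ c} := by
    ext u
    simp only [Set.mem_ofPred_eq, hassoc, le_iff_le_of_isGreatest_residual hmono hc]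
  rwa [hsets]

theorem le_of_isGreatest_residual (he : op e s = s) (hsm : s ≤ m)
    (ht : IsGreatest {u | op u s ≤ m} t) : e ≤ t :=
  ht.2 (show op e s ≤ m by rwa [he])

theorem exists_gt_lt_of_continuousAt {g : NNReal → NNReal} (hg : ContinuousAt g e)
    (hlt : g e < m) : ∃ u, e < u ∧ g u < m := by
  have hnear : ∀ᶠ u in 𝓝[>] e, g u < m :=
    (hg.eventually_lt continuousAt_const hlt).filter_mono nhdsWithin_le_nhds
  obtain ⟨u, hu, hgt⟩ := (hnear.and self_mem_nhdsWithin).exists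
  exact ⟨u, hgt, hu⟩

theorem residual_eq_iff (hcont : ContinuousAt (fun u => op u s) e)
    (hstrict : StrictMono fun u => op u s) (he : op e s = s) (hsm : s ≤ m)
    (ht : IsGreatest {u | op u s ≤ m} t) : t = e ↔ m = s := by
  constructor
  · rintro rfl
    by_contra hne
    obtain ⟨u, hgt, hu⟩ := exists_gt_lt_of_continuousAt (g := fun u => op u s)
      hcont (he.symm ▸ lt_of_le_of_ne hsm (Ne.symm hne))
    exact (ht.2 hu.le).not_gt hgt
  · intro hms
    have hte : op t s ≤ op e s := by rw [he]; exact ht.1.trans hms.le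
    exact le_antisymm (hstrict.le_iff_le.mp hte) (le_of_isGreatest_residual he hsm ht)

end Residual

theorem stmt_16_general {X : Type*} [DecidableEq X]
    (𝒮 : Finset (Finset X))
    (op : NNReal → NNReal → NNReal)
    (hcont : Continuous fun p : NNReal × NNReal => op p.1 p.2)
    (hassoc : ∀ u v w, op u (op v w) = op (op u v) w)
    (hstrict : ∀ u v w : NNReal, u < v → op u w < op v w)
    (e : NNReal) (he : ∀ v, op e v = v)
    (F : (X → NNReal) → Finset X → NNReal)
    (hFins : ∀ (D : X → NNReal) (x : X) (S : Finset X), x ∉ S →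
      F D (insert x S) = op (D x) (F D S))
    (C : X → NNReal)
    (Sstar : Finset X)
    (hopt : ∀ S ∈ 𝒮, F C Sstar ≤ F C S)
    (x : X) (hx : x ∈ Sstar)
    (mminus : NNReal)
    (hmminus : IsLeast {r : NNReal | ∃ S ∈ 𝒮, x ∉ S ∧ F C S = r} mminus)
    (Cplus : NNReal)
    (hCplus : IsGreatest {u : NNReal | op u (F C (Sstar.erase x)) ≤ mminus} Cplus)
    (utol : NNReal)
    (hutol : IsGreatest {u : NNReal | op u (C x) ≤ Cplus} utol) :
    IsGreatest {u : NNReal | op u (F C Sstar) ≤ mminus} utol ∧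
    e ≤ utol ∧
    (utol = e ↔ mminus = F C Sstar) := by
  have hstrict' (w : NNReal) : StrictMono fun u => op u w := fun _ _ h => hstrict _ _ w h
  have hsplit : F C Sstar = op (C x) (F C (Sstar.erase x)) := by
    rw [← hFins C x _ (Finset.notMem_erase x Sstar), Finset.insert_erase hx]
  have hle : F C Sstar ≤ mminus := by
    obtain ⟨S, hS, -, rfl⟩ := hmminus.1
    exact hopt S hS
  have hgreat : IsGreatest {u | op u (F C Sstar) ≤ mminus} utol :=
    hsplit ▸ isGreatest_residual_op hassoc (hstrict' _).monotone hCplus hutol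
  exact ⟨hgreat, le_of_isGreatest_residual (he _) hle hgreat,
    residual_eq_iff (hcont.comp (continuous_id.prodMk continuous_const)).continuousAt
      (hstrict' _) (he _) hle hgreat⟩

theorem stmt_16 {X : Type*} [Fintype X] [DecidableEq X]
    (hX : 2 ≤ Fintype.card X)
    (𝒮 : Finset (Finset X))
    (hne : ∀ S ∈ 𝒮, S.Nonempty)
    (hcup : ∀ x : X, ∃ S ∈ 𝒮, x ∈ S)
    (hcap : ∀ x : X, ∃ S ∈ 𝒮, x ∉ S)
    (op : NNReal → NNReal → NNReal)
    (hcont : Continuous fun p : NNReal × NNReal => op p.1 p.2)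
    (hassoc : ∀ u v w, op u (op v w) = op (op u v) w)
    (hcomm : ∀ u v, op u v = op v u)
    (hmono : ∀ u v w : NNReal, u ≤ v → op u w ≤ op v w)
    (hunb : ∀ v : NNReal, Tendsto (fun u => op u v) atTop atTop)
    (hstrict : ∀ u v w : NNReal, u < v → op u w < op v w)
    (e : NNReal) (he : ∀ v, op e v = v)
    (F : (X → NNReal) → Finset X → NNReal)
    (hFempty : ∀ D : X → NNReal, F D ∅ = e)
    (hFins : ∀ (D : X → NNReal) (x : X) (S : Finset X), x ∉ S →
      F D (insert x S) = op (D x) (F D S))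
    (C : X → NNReal)
    (Sstar : Finset X) (hSstar : Sstar ∈ 𝒮)
    (hopt : ∀ S ∈ 𝒮, F C Sstar ≤ F C S)
    (x : X) (hx : x ∈ Sstar)
    (mminus : NNReal)
    (hmminus : IsLeast {r : NNReal | ∃ S ∈ 𝒮, x ∉ S ∧ F C S = r} mminus)
    (Cplus : NNReal)
    (hCplus : IsGreatest {u : NNReal | op u (F C (Sstar.erase x)) ≤ mminus} Cplus)
    (utol : NNReal)
    (hutol : IsGreatest {u : NNReal | op u (C x) ≤ Cplus} utol) :
    IsGreatest {u : NNReal | op u (F C Sstar) ≤ mminus} utol ∧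
    e ≤ utol ∧
    (utol = e ↔ mminus = F C Sstar) :=
  stmt_16_general 𝒮 op hcont hassoc hstrict e he F hFins C Sstar hopt x hx mminus hmminus Cplus
    hCplus utol hutol
end

section
/- Let ⊕ be a strict A-operation on ℝ⁺, and consider the optimization problem f_C(S) = ⊕_{y∈S} C(y) → min over a set of trajectories 𝒮 on a finite ground set X. Let S₁*, S₂* be two optimal solutions and x ∈ S₁* ∖ S₂*. Then the upper tolerance of x with respect to S₁* equals the neutral element e: u_{S₁*}(x) = f_C(𝒮*₋ₓ) ⊖̄ f_C(𝒮*) = e, where f_C(𝒮*₋ₓ) = min{f_C(S) : x ∉ S ∈ 𝒮} and f_C(𝒮*) is the optimal value. -/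
/-! An optimal solution avoiding `x` makes the optimum over solutions avoiding `x` equal to the
global optimum, and the upper subtraction of a value from itself is the neutral element by strict
monotonicity of the operation. -/

theorem isLeast_setOf_exists_eq_of_forall_le {α β : Type*} [Preorder α] {𝒮 : Finset β}
    {p : β → Prop} {f : β → α} {S₀ : β} (hS₀ : S₀ ∈ 𝒮) (hp : p S₀)
    (hopt : ∀ S ∈ 𝒮, f S₀ ≤ f S) :
    IsLeast {r | ∃ S ∈ 𝒮, p S ∧ f S = r} (f S₀) :=
  ⟨⟨S₀, hS₀, hp, rfl⟩, by rintro _ ⟨S, hS, -, rfl⟩; exact hopt S hS⟩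

theorem isGreatest_setOf_op_le_self {α : Type*} [LinearOrder α] {op : α → α → α} {e w : α}
    (hstrict : StrictMono fun u => op u w) (he : op e w = w) :
    IsGreatest {u | op u w ≤ w} e :=
  ⟨he.le, fun _ hu => hstrict.le_iff_le.1 (hu.trans_eq he.symm)⟩

open Filter

theorem stmt_17_general {X : Type*}
    (𝒮 : Finset (Finset X))
    (op : NNReal → NNReal → NNReal)
    (hstrict : ∀ u v w : NNReal, u < v → op u w < op v w)
    (e : NNReal) (he : ∀ v, op e v = v)
    (F : (X → NNReal) → Finset X → NNReal)
    (C : X → NNReal)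
    (S₁ S₂ : Finset X) (hS₁ : S₁ ∈ 𝒮) (hS₂ : S₂ ∈ 𝒮)
    (hopt₁ : ∀ S ∈ 𝒮, F C S₁ ≤ F C S)
    (hopt₂ : ∀ S ∈ 𝒮, F C S₂ ≤ F C S)
    (x : X) (hx₂ : x ∉ S₂)
    (mminus : NNReal)
    (hmminus : IsLeast {r : NNReal | ∃ S ∈ 𝒮, x ∉ S ∧ F C S = r} mminus) :
    IsGreatest {u : NNReal | op u (F C S₁) ≤ mminus} e := by
  have hconstrained : mminus = F C S₂ :=
    hmminus.unique (isLeast_setOf_exists_eq_of_forall_le hS₂ hx₂ hopt₂)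
  have hglobal : F C S₁ = F C S₂ := le_antisymm (hopt₁ S₂ hS₂) (hopt₂ S₁ hS₁)
  rw [hconstrained, ← hglobal]
  exact isGreatest_setOf_op_le_self (fun _ _ h => hstrict _ _ _ h) (he _)

theorem stmt_17 {X : Type*} [Fintype X] [DecidableEq X]
    (hX : 2 ≤ Fintype.card X)
    (𝒮 : Finset (Finset X))
    (hne : ∀ S ∈ 𝒮, S.Nonempty)
    (hcup : ∀ x : X, ∃ S ∈ 𝒮, x ∈ S)
    (hcap : ∀ x : X, ∃ S ∈ 𝒮, x ∉ S)
    (op : NNReal → NNReal → NNReal)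
    (hcont : Continuous fun p : NNReal × NNReal => op p.1 p.2)
    (hassoc : ∀ u v w, op u (op v w) = op (op u v) w)
    (hcomm : ∀ u v, op u v = op v u)
    (hmono : ∀ u v w : NNReal, u ≤ v → op u w ≤ op v w)
    (hunb : ∀ v : NNReal, Tendsto (fun u => op u v) atTop atTop)
    (hstrict : ∀ u v w : NNReal, u < v → op u w < op v w)
    (e : NNReal) (he : ∀ v, op e v = v)
    (F : (X → NNReal) → Finset X → NNReal)
    (hFempty : ∀ D : X → NNReal, F D ∅ = e)
    (hFins : ∀ (D : X → NNReal) (x : X) (S : Finset X), x ∉ S →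
      F D (insert x S) = op (D x) (F D S))
    (C : X → NNReal)
    (S₁ S₂ : Finset X) (hS₁ : S₁ ∈ 𝒮) (hS₂ : S₂ ∈ 𝒮)
    (hopt₁ : ∀ S ∈ 𝒮, F C S₁ ≤ F C S)
    (hopt₂ : ∀ S ∈ 𝒮, F C S₂ ≤ F C S)
    (x : X) (hx₁ : x ∈ S₁) (hx₂ : x ∉ S₂)
    (mminus : NNReal)
    (hmminus : IsLeast {r : NNReal | ∃ S ∈ 𝒮, x ∉ S ∧ F C S = r} mminus) :
    IsGreatest {u : NNReal | op u (F C S₁) ≤ mminus} e :=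
  stmt_17_general 𝒮 op hstrict e he F C S₁ S₂ hS₁ hS₂ hopt₁ hopt₂ x hx₂ mminus hmminus
end

section
/- Consider the minimization of f_C(S) = Σ_{y∈S} C(y) over trajectories S ∈ 𝒮 on a finite ground set X, with C : X → [0,∞), and let S* be an optimal solution and x ∈ S*. Then the upper tolerance of x equals u_{S*}(x) = min{f_C(S) : S ∈ 𝒮, x ∉ S} − min{f_C(S) : S ∈ 𝒮} (Libura's formula), and for every γ ∈ [C(x), C(x) + u_{S*}(x)], S* remains optimal when the cost of x is changed to γ. -/
/-!
Raising the cost of `x ∈ S*` by `δ` raises the cost of `S*`, and of every trajectory through `x`,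
by exactly `δ`, while trajectories avoiding `x` keep their cost. Hence `S*` stays optimal iff
`f_C(S*) + δ` is at most the cheapest cost `m⁻` of a trajectory avoiding `x`, i.e. iff
`δ ≤ m⁻ - f_C(S*)`.
-/

open Finset

section

variable {X α : Type*} [DecidableEq X]

theorem Finset.sum_update_add_of_mem [AddCommMonoid α] (C : X → α) {S : Finset X} {x : X}
    (hx : x ∈ S) (δ : α) :
    ∑ y ∈ S, Function.update C x (C x + δ) y = ∑ y ∈ S, C y + δ := by
  rw [sum_update_of_mem hx, sum_eq_add_sum_sdiff_singleton_of_mem hx, add_right_comm]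

theorem optimal_update_add_iff [AddCommMonoid α] [PartialOrder α] [IsOrderedAddMonoid α]
    (𝒮 : Finset (Finset X)) (C : X → α) (Sstar : Finset X)
    (hopt : ∀ S ∈ 𝒮, ∑ y ∈ Sstar, C y ≤ ∑ y ∈ S, C y) {x : X} (hx : x ∈ Sstar) {mminus : α}
    (hmminus : IsLeast {r : α | ∃ S ∈ 𝒮, x ∉ S ∧ ∑ y ∈ S, C y = r} mminus) (δ : α) :
    (∀ S ∈ 𝒮, ∑ y ∈ Sstar, Function.update C x (C x + δ) y ≤
        ∑ y ∈ S, Function.update C x (C x + δ) y) ↔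
      ∑ y ∈ Sstar, C y + δ ≤ mminus := by
  simp only [sum_update_add_of_mem C hx]
  constructor
  · obtain ⟨S₀, hS₀, hxS₀, rfl⟩ := hmminus.1
    intro h
    simpa only [sum_update_of_notMem hxS₀] using h S₀ hS₀
  · intro hδ S hS
    by_cases hxS : x ∈ S
    · rw [sum_update_add_of_mem C hxS]
      exact add_le_add_left (hopt S hS) δ
    · rw [sum_update_of_notMem hxS]
      exact hδ.trans (hmminus.2 ⟨S, hS, hxS, rfl⟩)

end

theorem stmt_18_general {X : Type*} [DecidableEq X]
    (𝒮 : Finset (Finset X))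
    (C : X → NNReal)
    (Sstar : Finset X)
    (hopt : ∀ S ∈ 𝒮, ∑ y ∈ Sstar, C y ≤ ∑ y ∈ S, C y)
    (x : X) (hx : x ∈ Sstar)
    (mminus : NNReal)
    (hmminus : IsLeast {r : NNReal | ∃ S ∈ 𝒮, x ∉ S ∧ ∑ y ∈ S, C y = r} mminus) :
    IsGreatest {δ : NNReal | ∀ S ∈ 𝒮,
        ∑ y ∈ Sstar, Function.update C x (C x + δ) y ≤
          ∑ y ∈ S, Function.update C x (C x + δ) y}
      (mminus - ∑ y ∈ Sstar, C y) ∧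
    (∀ γ : NNReal, C x ≤ γ → γ ≤ C x + (mminus - ∑ y ∈ Sstar, C y) →
      ∀ S ∈ 𝒮, ∑ y ∈ Sstar, Function.update C x γ y ≤
        ∑ y ∈ S, Function.update C x γ y) := by
  have hle : ∑ y ∈ Sstar, C y ≤ mminus := by
    obtain ⟨S₀, hS₀, -, rfl⟩ := hmminus.1
    exact hopt S₀ hS₀
  have htol : {δ : NNReal | ∀ S ∈ 𝒮, ∑ y ∈ Sstar, Function.update C x (C x + δ) y ≤
      ∑ y ∈ S, Function.update C x (C x + δ) y} = Set.Iic (mminus - ∑ y ∈ Sstar, C y) := by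
    ext δ
    exact (optimal_update_add_iff 𝒮 C Sstar hopt hx hmminus δ).trans (le_tsub_iff_left hle).symm
  refine ⟨htol ▸ isGreatest_Iic, fun γ hγ hγu => ?_⟩
  obtain ⟨δ, rfl⟩ := exists_add_of_le hγ
  have hδ : δ ∈ Set.Iic (mminus - ∑ y ∈ Sstar, C y) := le_of_add_le_add_left hγu
  rw [← htol] at hδ
  exact hδ

theorem stmt_18 {X : Type*} [Fintype X] [DecidableEq X]
    (hX : 2 ≤ Fintype.card X)
    (𝒮 : Finset (Finset X))
    (hne : ∀ S ∈ 𝒮, S.Nonempty)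
    (hcup : ∀ x : X, ∃ S ∈ 𝒮, x ∈ S)
    (hcap : ∀ x : X, ∃ S ∈ 𝒮, x ∉ S)
    (C : X → NNReal)
    (Sstar : Finset X) (hSstar : Sstar ∈ 𝒮)
    (hopt : ∀ S ∈ 𝒮, ∑ y ∈ Sstar, C y ≤ ∑ y ∈ S, C y)
    (x : X) (hx : x ∈ Sstar)
    (mminus : NNReal)
    (hmminus : IsLeast {r : NNReal | ∃ S ∈ 𝒮, x ∉ S ∧ ∑ y ∈ S, C y = r} mminus) :
    IsGreatest {δ : NNReal | ∀ S ∈ 𝒮,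
        ∑ y ∈ Sstar, Function.update C x (C x + δ) y ≤
          ∑ y ∈ S, Function.update C x (C x + δ) y}
      (mminus - ∑ y ∈ Sstar, C y) ∧
    (∀ γ : NNReal, C x ≤ γ → γ ≤ C x + (mminus - ∑ y ∈ Sstar, C y) →
      ∀ S ∈ 𝒮, ∑ y ∈ Sstar, Function.update C x γ y ≤
        ∑ y ∈ S, Function.update C x γ y) :=
  stmt_18_general 𝒮 C Sstar hopt x hx mminus hmminus
end

section
/- Let ⊕ be a strict A-operation on ℝ⁺ with neutral element e, assume C(x) > 0 (resp. C(x) ≥ e in the multiplicative case) for all x ∈ X, and let T_C be the tolerance function of the problem f_C(S) = ⊕_{y∈S}C(y) → min over 𝒮. Then the optimal solution is unique (|𝒮*| = 1) if and only if T_C(x) ≠ e for all x ∈ X. -/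
open Filter Topology

open scoped NNReal

/-! `x` has neutral tolerance exactly when some optimal solution disagrees with `S*` at `x`, so
that forcing `x` out of (if `x ∈ S*`) or into (if `x ∉ S*`) the solution does not raise the
optimal value. Since `⊕` is continuous and strictly increasing, the extremal conditions defining
the tolerances turn `T_C(x) = e` into exactly this equality of optimal values (for the lower
tolerance by way of `C⁻(x) = C(x)`). Two distinct optimal solutions disagree at some `x`. -/

theorem IsLeast.eq_iff_mem {α : Type*} [PartialOrder α] {s : Set α} {a b : α} (ha : IsLeast s a)
    (hb : b ∈ lowerBounds s) : b = a ↔ b ∈ s :=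
  ⟨fun h => h ▸ ha.1, fun h => IsLeast.unique ⟨h, hb⟩ ha⟩

theorem exists_isLeast_setOf_exists_mem_finset {ι α : Type*} [LinearOrder α] (𝒮 : Finset ι)
    (f : ι → α) {p : ι → Prop} (hp : ∃ S ∈ 𝒮, p S) :
    ∃ M, IsLeast {r | ∃ S ∈ 𝒮, p S ∧ f S = r} M := by
  classical
  obtain ⟨S, hS, hmin⟩ := (𝒮.filter p).exists_min_image f (by simpa [Finset.Nonempty] using hp)
  rw [Finset.mem_filter] at hS
  refine ⟨f S, ⟨S, hS.1, hS.2, rfl⟩, ?_⟩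
  rintro _ ⟨S', hS', hpS', rfl⟩
  exact hmin S' (Finset.mem_filter.2 ⟨hS', hpS'⟩)

section StrictMono

variable {α β : Type*} [LinearOrder α] [TopologicalSpace α] [LinearOrder β] [TopologicalSpace β]
  [OrderClosedTopology β] {f : α → β} {a : α} {b : β}

theorem StrictMono.isGreatest_setOf_apply_le_iff (hf : StrictMono f) (hfa : ContinuousAt f a)
    [(𝓝[>] a).NeBot] : IsGreatest {u | f u ≤ b} a ↔ f a = b := by
  refine ⟨fun h => h.1.antisymm (not_lt.1 fun hlt => ?_), ?_⟩
  · obtain ⟨u, hub, hau⟩ :=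
      (((hfa.eventually (eventually_lt_nhds hlt)).filter_mono nhdsWithin_le_nhds).and
        (self_mem_nhdsWithin (s := Set.Ioi a))).exists
    exact (h.2 hub.le).not_gt hau
  · rintro rfl
    exact ⟨le_rfl, fun u hu => hf.le_iff_le.1 hu⟩

theorem StrictMono.isLeast_setOf_le_apply_iff (hf : StrictMono f) (hfa : ContinuousAt f a)
    [(𝓝[<] a).NeBot] : IsLeast {u | b ≤ f u} a ↔ b = f a := by
  refine ⟨fun h => h.1.antisymm (not_lt.1 fun hlt => ?_), ?_⟩
  · obtain ⟨u, hbu, hua⟩ :=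
      (((hfa.eventually (eventually_gt_nhds hlt)).filter_mono nhdsWithin_le_nhds).and
        (self_mem_nhdsWithin (s := Set.Iio a))).exists
    exact (h.2 hbu.le).not_gt hua
  · rintro rfl
    exact ⟨le_rfl, fun u hu => hf.le_iff_le.1 hu⟩

end StrictMono

section Tolerance

variable {X : Type*} {op : ℝ≥0 → ℝ≥0 → ℝ≥0} {e : ℝ≥0} {𝒮 : Finset (Finset X)}
  {f : Finset X → ℝ≥0} {S₀ : Finset X} {p : Finset X → Prop} {t : ℝ≥0}

theorem upperTolerance_eq_neutral_iff (hcont : ∀ c, Continuous fun u => op u c)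
    (hstrict : ∀ c, StrictMono fun u => op u c) (he : ∀ v, op e v = v)
    (hopt : ∀ S ∈ 𝒮, f S₀ ≤ f S) (hp : ∃ S ∈ 𝒮, p S)
    (ht : ∀ M, IsLeast {r | ∃ S ∈ 𝒮, p S ∧ f S = r} M →
      IsGreatest {u | op u (f S₀) ≤ M} t) :
    t = e ↔ ∃ S ∈ 𝒮, p S ∧ f S = f S₀ := by
  obtain ⟨M, hM⟩ := exists_isLeast_setOf_exists_mem_finset 𝒮 f hp
  have hlb : f S₀ ∈ lowerBounds {r | ∃ S ∈ 𝒮, p S ∧ f S = r} := by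
    rintro _ ⟨S, hS, -, rfl⟩
    exact hopt S hS
  calc t = e ↔ IsGreatest {u | op u (f S₀) ≤ M} e := ⟨fun h => h ▸ ht M hM, (ht M hM).unique⟩
    _ ↔ op e (f S₀) = M := (hstrict _).isGreatest_setOf_apply_le_iff (hcont _).continuousAt
    _ ↔ f S₀ = M := by rw [he]
    _ ↔ _ := hM.eq_iff_mem hlb

theorem lowerTolerance_eq_neutral_iff (hcont : ∀ c, Continuous fun u => op u c)
    (hstrict : ∀ c, StrictMono fun u => op u c) (hcomm : ∀ u v, op u v = op v u)
    (he : ∀ v, op e v = v) {c : ℝ≥0} (hc : 0 < c)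
    (hopt : ∀ S ∈ 𝒮, f S₀ ≤ f S) (hp : ∃ S ∈ 𝒮, p S)
    (ht : ∀ M Cm, IsLeast {r | ∃ S ∈ 𝒮, p S ∧ f S = r} M →
      IsLeast {u | op c (f S₀) ≤ op u M} Cm → IsGreatest {u | op u Cm ≤ c} t) :
    t = e ↔ ∃ S ∈ 𝒮, p S ∧ f S = f S₀ := by
  obtain ⟨M, hM⟩ := exists_isLeast_setOf_exists_mem_finset 𝒮 f hp
  have hlb : f S₀ ∈ lowerBounds {r | ∃ S ∈ 𝒮, p S ∧ f S = r} := by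
    rintro _ ⟨S, hS, -, rfl⟩
    exact hopt S hS
  set A := {u | op c (f S₀) ≤ op u M}
  have hcA : c ∈ A := by
    show op c (f S₀) ≤ op c M
    rw [hcomm c, hcomm c]
    exact (hstrict c).monotone (hlb hM.1)
  have hA : IsLeast A (sInf A) :=
    (isClosed_le continuous_const (hcont M)).isLeast_csInf ⟨c, hcA⟩ (OrderBot.bddBelow A)
  have : (𝓝[<] c).NeBot := nhdsLT_neBot_of_exists_lt ⟨0, hc⟩
  calc t = e ↔ IsGreatest {u | op u (sInf A) ≤ c} e :=
        ⟨fun h => h ▸ ht M _ hM hA, (ht M _ hM hA).unique⟩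
    _ ↔ op e (sInf A) = c := (hstrict _).isGreatest_setOf_apply_le_iff (hcont _).continuousAt
    _ ↔ IsLeast A c := by rw [he]; exact ⟨fun h => h ▸ hA, hA.unique⟩
    _ ↔ op c (f S₀) = op c M := (hstrict M).isLeast_setOf_le_apply_iff (hcont M).continuousAt
    _ ↔ f S₀ = M := by rw [hcomm c, hcomm c]; exact (hstrict c).injective.eq_iff
    _ ↔ _ := hM.eq_iff_mem hlb

end Tolerance

theorem stmt_19_general {X : Type*}
    (𝒮 : Finset (Finset X))
    (hcup : ∀ x : X, ∃ S ∈ 𝒮, x ∈ S)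
    (hcap : ∀ x : X, ∃ S ∈ 𝒮, x ∉ S)
    (op : NNReal → NNReal → NNReal)
    (hcont : Continuous fun p : NNReal × NNReal => op p.1 p.2)
    (hcomm : ∀ u v, op u v = op v u)
    (hstrict : ∀ u v w : NNReal, u < v → op u w < op v w)
    (e : NNReal) (he : ∀ v, op e v = v)
    (F : (X → NNReal) → Finset X → NNReal)
    (C : X → NNReal)
    (hCe : ∀ x, e ≤ C x) (hCpos : e = 0 → ∀ x, 0 < C x)
    (Sstar : Finset X) (hSstar : Sstar ∈ 𝒮)
    (hopt : ∀ S ∈ 𝒮, F C Sstar ≤ F C S)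
    (utol : X → NNReal)
    (hutol : ∀ x ∈ Sstar, ∀ mminus : NNReal,
      IsLeast {r : NNReal | ∃ S ∈ 𝒮, x ∉ S ∧ F C S = r} mminus →
      IsGreatest {u : NNReal | op u (F C Sstar) ≤ mminus} (utol x))
    (ltol : X → NNReal)
    (hltol : ∀ x ∉ Sstar, ∀ mx Cminus : NNReal,
      IsLeast {r : NNReal | ∃ S ∈ 𝒮, x ∈ S ∧ F C S = r} mx →
      IsLeast {u : NNReal | op (C x) (F C Sstar) ≤ op u mx} Cminus →
      IsGreatest {u : NNReal | op u Cminus ≤ C x} (ltol x)) :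
    (∀ S ∈ 𝒮, (∀ S' ∈ 𝒮, F C S ≤ F C S') → S = Sstar) ↔
      (∀ x : X, (x ∈ Sstar → utol x ≠ e) ∧ (x ∉ Sstar → ltol x ≠ e)) := by
  have hcont' c : Continuous fun u => op u c := hcont.comp (continuous_id.prodMk continuous_const)
  have hstrict' c : StrictMono fun u => op u c := fun u v h => hstrict u v c h
  have hC x : 0 < C x := (eq_zero_or_pos e).elim (fun h => hCpos h x) (fun h => h.trans_le (hCe x))
  have hU x (hx : x ∈ Sstar) : utol x = e ↔ ∃ S ∈ 𝒮, x ∉ S ∧ F C S = F C Sstar :=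
    upperTolerance_eq_neutral_iff hcont' hstrict' he hopt (hcap x) (hutol x hx)
  have hL x (hx : x ∉ Sstar) : ltol x = e ↔ ∃ S ∈ 𝒮, x ∈ S ∧ F C S = F C Sstar :=
    lowerTolerance_eq_neutral_iff hcont' hstrict' hcomm he (hC x) hopt (hcup x) (hltol x hx)
  have hopt_of_eq {S} (hSm : F C S = F C Sstar) S' (hS' : S' ∈ 𝒮) : F C S ≤ F C S' :=
    hSm ▸ hopt S' hS'
  constructor
  · intro huniq x
    refine ⟨fun hx h => ?_, fun hx h => ?_⟩
    · obtain ⟨S, hS, hxS, hSm⟩ := (hU x hx).1 h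
      exact hxS (huniq S hS (hopt_of_eq hSm) ▸ hx)
    · obtain ⟨S, hS, hxS, hSm⟩ := (hL x hx).1 h
      exact hx (huniq S hS (hopt_of_eq hSm) ▸ hxS)
  · intro htol S hS hSopt
    have hSm : F C S = F C Sstar := (hSopt Sstar hSstar).antisymm (hopt S hS)
    by_contra hne
    obtain ⟨x, hx⟩ : ∃ x, ¬(x ∈ S ↔ x ∈ Sstar) := by simpa [Finset.ext_iff] using hne
    by_cases hxS : x ∈ Sstar
    · exact (htol x).1 hxS ((hU x hxS).2 ⟨S, hS, by tauto, hSm⟩)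
    · exact (htol x).2 hxS ((hL x hxS).2 ⟨S, hS, by tauto, hSm⟩)

theorem stmt_19 {X : Type*} [Fintype X] [DecidableEq X]
    (hX : 2 ≤ Fintype.card X)
    (𝒮 : Finset (Finset X))
    (hne : ∀ S ∈ 𝒮, S.Nonempty)
    (hcup : ∀ x : X, ∃ S ∈ 𝒮, x ∈ S)
    (hcap : ∀ x : X, ∃ S ∈ 𝒮, x ∉ S)
    (op : NNReal → NNReal → NNReal)
    (hcont : Continuous fun p : NNReal × NNReal => op p.1 p.2)
    (hassoc : ∀ u v w, op u (op v w) = op (op u v) w)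
    (hcomm : ∀ u v, op u v = op v u)
    (hmono : ∀ u v w : NNReal, u ≤ v → op u w ≤ op v w)
    (hunb : ∀ v : NNReal, Tendsto (fun u => op u v) atTop atTop)
    (hstrict : ∀ u v w : NNReal, u < v → op u w < op v w)
    (e : NNReal) (he : ∀ v, op e v = v)
    (F : (X → NNReal) → Finset X → NNReal)
    (hFempty : ∀ D : X → NNReal, F D ∅ = e)
    (hFins : ∀ (D : X → NNReal) (x : X) (S : Finset X), x ∉ S →
      F D (insert x S) = op (D x) (F D S))
    (C : X → NNReal)
    (hCe : ∀ x, e ≤ C x) (hCpos : e = 0 → ∀ x, 0 < C x)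
    (Sstar : Finset X) (hSstar : Sstar ∈ 𝒮)
    (hopt : ∀ S ∈ 𝒮, F C Sstar ≤ F C S)
    (utol : X → NNReal)
    (hutol : ∀ x ∈ Sstar, ∀ mminus : NNReal,
      IsLeast {r : NNReal | ∃ S ∈ 𝒮, x ∉ S ∧ F C S = r} mminus →
      IsGreatest {u : NNReal | op u (F C Sstar) ≤ mminus} (utol x))
    (ltol : X → NNReal)
    (hltol : ∀ x ∉ Sstar, ∀ mx Cminus : NNReal,
      IsLeast {r : NNReal | ∃ S ∈ 𝒮, x ∈ S ∧ F C S = r} mx →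
      IsLeast {u : NNReal | op (C x) (F C Sstar) ≤ op u mx} Cminus →
      IsGreatest {u : NNReal | op u Cminus ≤ C x} (ltol x)) :
    (∀ S ∈ 𝒮, (∀ S' ∈ 𝒮, F C S ≤ F C S') → S = Sstar) ↔
      (∀ x : X, (x ∈ Sstar → utol x ≠ e) ∧ (x ∉ Sstar → ltol x ≠ e)) :=
  stmt_19_general 𝒮 hcup hcap op hcont hcomm hstrict e he F C hCe hCpos Sstar hSstar hopt utol hutol
    ltol hltol
end
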